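/- Let G be a finite simple graph with at least one vertex and let k ≥ 4 be an even integer. Let λ_min(Q(G)) denote the least eigenvalue of the signless Laplacian matrix Q(G) = D(G) + A(G) of G. Then λ_min(Q(G)) is a signless Laplacian H-eigenvalue of the generalized power hypergraph G^{k,k/2}, and every signless Laplacian H-eigenvalue of G^{k,k/2} is at least λ_min(Q(G)); that is, the least signless Laplacian H-eigenvalue of G^{k,k/2} equals the least signless Laplacian eigenvalue of G. -/

import Mathlib

open Finset

/-- The edge set of the generalized power hypergraph `G^{k, k/2}` (with `s = k/2`):
each edge `{u,v}` of `G` is blown up into the `2s`-set `({u} × Fin s) ∪ ({v} × Fin s)`. -/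
def powerEdges {V : Type*} [Fintype V] [DecidableEq V] (G : SimpleGraph V)
    [DecidableRel G.Adj] (s : ℕ) : Finset (Finset (V × Fin s)) :=
  (Finset.univ.filter fun p : V × V => G.Adj p.1 p.2).image
    (fun p => ({p.1} ×ˢ (Finset.univ : Finset (Fin s)))
        ∪ ({p.2} ×ˢ (Finset.univ : Finset (Fin s))))

/-- `lam` is an adjacency H-eigenvalue of the generalized power hypergraph `G^{k,s}`
(`k = 2s`) with H-eigenvector `x`. -/
def IsAdjHEigPow {V : Type*} [Fintype V] [DecidableEq V] (G : SimpleGraph V)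
    [DecidableRel G.Adj] (k s : ℕ) (lam : ℝ) (x : V × Fin s → ℝ) : Prop :=
  x ≠ 0 ∧ ∀ p : V × Fin s,
    lam * x p ^ (k - 1)
      = ∑ e ∈ (powerEdges G s).filter (fun e => p ∈ e), ∏ w ∈ e.erase p, x w

/-- `lam` is a signless Laplacian H-eigenvalue of the generalized power hypergraph
`G^{k,s}` (`k = 2s`) with H-eigenvector `x`. -/
def IsQHEigPow {V : Type*} [Fintype V] [DecidableEq V] (G : SimpleGraph V)
    [DecidableRel G.Adj] (k s : ℕ) (lam : ℝ) (x : V × Fin s → ℝ) : Prop :=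
  x ≠ 0 ∧ ∀ p : V × Fin s,
    lam * x p ^ (k - 1)
      = (((powerEdges G s).filter (fun e => p ∈ e)).card : ℝ) * x p ^ (k - 1)
        + ∑ e ∈ (powerEdges G s).filter (fun e => p ∈ e), ∏ w ∈ e.erase p, x w

/-!
Write `a v = ∏ⱼ x (v, j)` for the block products of a vector `x` on `V × Fin s`. Multiplying the
H-eigenvalue equation of `G^{2s,s}` at `(v, i)` by `x (v, i)` gives
`(μ - d v) x(v, i)^{2s} = a v (A a) v` for every `i`, which forces `μ (a v)² = a v (Q a) v`.
Summing over `v`, `μ ‖a‖² = aᵀ Q a ≥ λ_min ‖a‖²`, so `μ ≥ λ_min` unless `a = 0`; in that case `μ`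
is a vertex degree, i.e. a diagonal entry of `Q`, which is again at least `λ_min`.
Conversely, an eigenvector `y` of `Q` lifts to an H-eigenvector by splitting each `y v` into `s`
factors of absolute value `|y v|^{1/s}`.
-/

open Matrix

section EqualSquares

variable {ι : Type*} [Fintype ι]

theorem exists_prod_eq_and_sq_eq [DecidableEq ι] [Nonempty ι] (r : ℝ) :
    ∃ x : ι → ℝ, ∏ i, x i = r ∧ ∀ i j, x i ^ 2 = x j ^ 2 := by
  let i₀ : ι := Classical.arbitrary ι
  let t : ℝ := |r| ^ ((Fintype.card ι : ℝ)⁻¹)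
  refine ⟨fun i => if i = i₀ then SignType.sign r * t else t, ?_, ?_⟩
  · have ht : t ^ Fintype.card ι = |r| :=
      Real.rpow_inv_natCast_pow (abs_nonneg r) Fintype.card_ne_zero
    rw [← mul_prod_erase _ _ (mem_univ i₀), if_pos rfl,
      prod_congr rfl fun j hj => if_neg (ne_of_mem_erase hj),
      prod_const, card_erase_of_mem (mem_univ _), card_univ,
      mul_assoc, ← pow_succ', Nat.sub_add_cancel Fintype.card_pos, ht, sign_mul_abs]
  · have hsq : (SignType.sign r * t) ^ 2 = t ^ 2 := by
      rcases lt_trichotomy r 0 with hr | rfl | hr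
      · simp [sign_neg hr]
      · simp [t, Fintype.card_ne_zero]
      · simp [sign_pos hr]
    intro i j
    dsimp only
    split_ifs <;> simp [hsq]

theorem prod_erase_mul_prod_of_sq_eq [DecidableEq ι] {x : ι → ℝ} {i : ι}
    (h : ∀ j, x j ^ 2 = x i ^ 2) :
    (∏ j ∈ univ.erase i, x j) * ∏ j, x j = x i ^ (2 * Fintype.card ι - 1) := by
  have hcard : 2 * Fintype.card ι - 1 = 2 * (Fintype.card ι - 1) + 1 := by
    have := Fintype.card_pos_iff.mpr ⟨i⟩; omega
  rw [← prod_erase_mul _ _ (mem_univ i), ← mul_assoc, ← sq, ← prod_pow,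
    prod_congr rfl fun j _ => h j, prod_const,
    card_erase_of_mem (mem_univ _), card_univ, hcard, ← pow_mul, ← pow_succ]

theorem mul_prod_sq_eq_of_forall_mul_pow_eq [Nonempty ι] {x : ι → ℝ} {c P : ℝ}
    (h : ∀ i, c * x i ^ (2 * Fintype.card ι) = P) : c * (∏ i, x i) ^ 2 = P := by
  let i₀ : ι := Classical.arbitrary ι
  rcases eq_or_ne c 0 with rfl | hc
  · simpa using h i₀
  have hsq : ∀ i, x i ^ 2 = x i₀ ^ 2 := fun i =>
    (pow_left_inj₀ (sq_nonneg _) (sq_nonneg _) Fintype.card_ne_zero).mp <| by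
      rw [← pow_mul, ← pow_mul]; exact mul_left_cancel₀ hc ((h i).trans (h i₀).symm)
  rw [← prod_pow, prod_congr rfl fun i _ => hsq i, prod_const,
    card_univ, ← pow_mul, h]

end EqualSquares

theorem Matrix.IsHermitian.mul_dotProduct_self_le_dotProduct_mulVec {n : Type*} [Fintype n]
    [DecidableEq n] {Q : Matrix n n ℝ} (hQ : Q.IsHermitian) {lam : ℝ}
    (hlam : ∀ μ : ℝ, (∃ y : n → ℝ, y ≠ 0 ∧ Q *ᵥ y = μ • y) → lam ≤ μ) (z : n → ℝ) :
    lam * (z ⬝ᵥ z) ≤ z ⬝ᵥ (Q *ᵥ z) := by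
  have hQ' : (Q - lam • 1).IsHermitian := hQ.sub (isHermitian_one.smul (.all lam))
  have hpsd : (Q - lam • 1).PosSemidef := by
    refine hQ'.posSemidef_iff_eigenvalues_nonneg.mpr fun i => ?_
    have hb := hQ'.mulVec_eigenvectorBasis i
    rw [sub_mulVec, smul_mulVec, one_mulVec, sub_eq_iff_eq_add, ← add_smul] at hb
    have hb0 := (WithLp.ofLp_eq_zero 2).ne.2 (hQ'.eigenvectorBasis.orthonormal.ne_zero i)
    exact (le_add_iff_nonneg_left lam).mp (hlam _ ⟨_, hb0, hb⟩)
  have := hpsd.dotProduct_mulVec_nonneg z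
  rw [star_trivial, sub_mulVec, smul_mulVec, one_mulVec, dotProduct_sub, dotProduct_smul,
    smul_eq_mul, sub_nonneg] at this
  exact this

namespace SimpleGraph

variable {V : Type*} [Fintype V] [DecidableEq V] (G : SimpleGraph V) [DecidableRel G.Adj]

def signlessLapMatrix (R : Type*) [Ring R] : Matrix V V R := G.degMatrix R + G.adjMatrix R

theorem isHermitian_signlessLapMatrix : (G.signlessLapMatrix ℝ).IsHermitian :=
  (conjTranspose_eq_transpose_of_trivial _).trans ((G.isSymm_degMatrix ℝ).add G.isSymm_adjMatrix)

theorem signlessLapMatrix_mulVec_apply {R : Type*} [Ring R] (v : V) (y : V → R) :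
    (G.signlessLapMatrix R *ᵥ y) v = G.degree v * y v + (G.adjMatrix R *ᵥ y) v := by
  rw [signlessLapMatrix, add_mulVec, Pi.add_apply, degMatrix_mulVec_apply]

theorem signlessLapMatrix_apply_self {R : Type*} [Ring R] (v : V) :
    G.signlessLapMatrix R v v = G.degree v := by
  simp [signlessLapMatrix, degMatrix]

theorem of_eq_signlessLapMatrix :
    (Matrix.of fun u w : V =>
      (if u = w then (G.degree u : ℝ) else 0) + (if G.Adj u w then (1 : ℝ) else 0))
      = G.signlessLapMatrix ℝ := by
  ext u w
  simp [signlessLapMatrix, degMatrix, diagonal_apply]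

end SimpleGraph

section PowerHypergraph

variable {V : Type*} [DecidableEq V] {s : ℕ}

def powerEdge (s : ℕ) (u v : V) : Finset (V × Fin s) :=
  ({u} ×ˢ (univ : Finset (Fin s))) ∪ ({v} ×ˢ (univ : Finset (Fin s)))

theorem mem_powerEdge {u v : V} {p : V × Fin s} : p ∈ powerEdge s u v ↔ p.1 = u ∨ p.1 = v := by
  cases p
  simp [powerEdge, eq_comm]

theorem powerEdge_comm (u v : V) : powerEdge s u v = powerEdge s v u :=
  union_comm _ _

theorem prod_erase_powerEdge (x : V × Fin s → ℝ) {u v : V} (huv : u ≠ v) (i : Fin s) :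
    ∏ w ∈ (powerEdge s u v).erase (v, i), x w
      = (∏ j, x (u, j)) * ∏ j ∈ univ.erase i, x (v, j) := by
  have hsplit : (powerEdge s u v).erase (v, i) = ({u} ×ˢ univ) ∪ ({v} ×ˢ univ.erase i) := by
    ext ⟨w, j⟩
    simp only [powerEdge, mem_erase, mem_union, mem_product, mem_singleton, mem_univ, and_true,
      ne_eq, Prod.mk.injEq]
    grind
  have hdisj : Disjoint ({u} ×ˢ univ) ({v} ×ˢ univ.erase i) :=
    disjoint_left.mpr fun p hu hv => huv <|
      (mem_singleton.mp (mem_product.mp hu).1).symm.trans (mem_singleton.mp (mem_product.mp hv).1)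
  rw [hsplit, prod_union hdisj, prod_product, prod_product, prod_singleton, prod_singleton]

variable [Fintype V] (G : SimpleGraph V) [DecidableRel G.Adj]

theorem filter_mem_powerEdges (v : V) (i : Fin s) :
    (powerEdges G s).filter (fun e => (v, i) ∈ e)
      = (G.neighborFinset v).image (fun u => powerEdge s u v) := by
  ext e
  simp only [powerEdges, mem_filter, mem_image, mem_univ, true_and, SimpleGraph.mem_neighborFinset]
  constructor
  · rintro ⟨⟨⟨a, b⟩, hab, rfl⟩, hp⟩
    rcases mem_powerEdge.mp hp with rfl | rfl
    · exact ⟨b, hab, powerEdge_comm _ _⟩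
    · exact ⟨a, hab.symm, rfl⟩
  · rintro ⟨u, hu, rfl⟩
    exact ⟨⟨(u, v), hu.symm, rfl⟩, mem_powerEdge.mpr (Or.inr rfl)⟩

theorem injOn_powerEdge (hs : 0 < s) (v : V) :
    Set.InjOn (fun u => powerEdge s u v) (G.neighborFinset v) := by
  intro a ha b _ (hab : powerEdge s a v = powerEdge s b v)
  have hmem : ((a, ⟨0, hs⟩) : V × Fin s) ∈ powerEdge s b v :=
    hab ▸ mem_powerEdge.mpr (Or.inl rfl)
  exact (mem_powerEdge.mp hmem).resolve_right
    (G.ne_of_adj ((G.mem_neighborFinset _ _).mp ha)).symm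

theorem card_filter_mem_powerEdges (hs : 0 < s) (v : V) (i : Fin s) :
    ((powerEdges G s).filter (fun e => (v, i) ∈ e)).card = G.degree v := by
  rw [filter_mem_powerEdges, card_image_of_injOn (injOn_powerEdge G hs v),
    SimpleGraph.card_neighborFinset_eq_degree]

theorem sum_filter_mem_powerEdges (hs : 0 < s) (v : V) (i : Fin s)
    (f : Finset (V × Fin s) → ℝ) :
    ∑ e ∈ (powerEdges G s).filter (fun e => (v, i) ∈ e), f e
      = ∑ u ∈ G.neighborFinset v, f (powerEdge s u v) := by
  rw [filter_mem_powerEdges, sum_image (injOn_powerEdge G hs v)]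

end PowerHypergraph

section PowerHypergraphEigen

variable {V : Type*} [Fintype V] [DecidableEq V] (G : SimpleGraph V) [DecidableRel G.Adj]
  {k s : ℕ}

def blockProd (x : V × Fin s → ℝ) (v : V) : ℝ := ∏ j, x (v, j)

theorem sum_filter_mem_powerEdges_prod_erase (hs : 0 < s) (x : V × Fin s → ℝ) (v : V)
    (i : Fin s) :
    ∑ e ∈ (powerEdges G s).filter (fun e => (v, i) ∈ e), ∏ w ∈ e.erase (v, i), x w
      = (G.adjMatrix ℝ *ᵥ blockProd x) v * ∏ j ∈ univ.erase i, x (v, j) := by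
  rw [sum_filter_mem_powerEdges G hs, SimpleGraph.adjMatrix_mulVec_apply, sum_mul]
  exact sum_congr rfl fun u hu =>
    prod_erase_powerEdge x (G.ne_of_adj ((G.mem_neighborFinset _ _).mp hu)).symm i

theorem isQHEigPow_iff (hs : 0 < s) {μ : ℝ} {x : V × Fin s → ℝ} :
    IsQHEigPow G k s μ x ↔ x ≠ 0 ∧ ∀ v i, μ * x (v, i) ^ (k - 1)
      = G.degree v * x (v, i) ^ (k - 1)
        + (G.adjMatrix ℝ *ᵥ blockProd x) v * ∏ j ∈ univ.erase i, x (v, j) := by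
  simp only [IsQHEigPow, Prod.forall, card_filter_mem_powerEdges G hs,
    sum_filter_mem_powerEdges_prod_erase G hs]

theorem exists_isQHEigPow_of_mulVec_eq (hks : k = 2 * s) (hs : 0 < s) {lam : ℝ} {y : V → ℝ}
    (hy : y ≠ 0) (hyQ : G.signlessLapMatrix ℝ *ᵥ y = lam • y) :
    ∃ x, IsQHEigPow G k s lam x := by
  have : Nonempty (Fin s) := ⟨⟨0, hs⟩⟩
  choose z hprod hsq using fun v => exists_prod_eq_and_sq_eq (ι := Fin s) (y v)
  have hblock : blockProd (fun p : V × Fin s => z p.1 p.2) = y := funext hprod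
  refine ⟨fun p => z p.1 p.2, (isQHEigPow_iff G hs).mpr ⟨fun h0 => hy ?_, fun v i => ?_⟩⟩
  · rw [← hblock, h0]
    exact funext fun v => prod_eq_zero (mem_univ ⟨0, hs⟩) rfl
  · have hadj : (G.adjMatrix ℝ *ᵥ y) v = (lam - G.degree v) * y v := by
      have := congrFun hyQ v
      rw [G.signlessLapMatrix_mulVec_apply, Pi.smul_apply, smul_eq_mul] at this
      linear_combination this
    have hpow := prod_erase_mul_prod_of_sq_eq fun j => hsq v j i
    rw [Fintype.card_fin, ← hks, hprod] at hpow
    rw [hblock, hadj]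
    linear_combination (G.degree v - lam) * hpow

theorem sub_degree_mul_pow_eq (hk : k ≠ 0) (hs : 0 < s) {μ : ℝ} {x : V × Fin s → ℝ}
    (hx : IsQHEigPow G k s μ x) (v : V) (i : Fin s) :
    (μ - G.degree v) * x (v, i) ^ k = (G.adjMatrix ℝ *ᵥ blockProd x) v * blockProd x v := by
  have h := ((isQHEigPow_iff G hs).mp hx).2 v i
  rw [blockProd, ← prod_erase_mul _ _ (mem_univ i), ← pow_sub_one_mul hk]
  linear_combination x (v, i) * h

theorem mul_blockProd_sq_eq (hks : k = 2 * s) (hs : 0 < s) {μ : ℝ} {x : V × Fin s → ℝ}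
    (hx : IsQHEigPow G k s μ x) (v : V) :
    μ * blockProd x v ^ 2 = blockProd x v * (G.signlessLapMatrix ℝ *ᵥ blockProd x) v := by
  have : Nonempty (Fin s) := ⟨⟨0, hs⟩⟩
  have h : (μ - G.degree v) * blockProd x v ^ 2 = _ :=
    mul_prod_sq_eq_of_forall_mul_pow_eq (x := fun j => x (v, j)) fun i => by
      rw [Fintype.card_fin, ← hks]; exact sub_degree_mul_pow_eq G (by omega) hs hx v i
  rw [G.signlessLapMatrix_mulVec_apply]
  linear_combination h

theorem le_of_isQHEigPow (hks : k = 2 * s) (hs : 0 < s) {lam μ : ℝ}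
    (hlam : ∀ μ : ℝ, (∃ y : V → ℝ, y ≠ 0 ∧ G.signlessLapMatrix ℝ *ᵥ y = μ • y) → lam ≤ μ)
    {x : V × Fin s → ℝ} (hx : IsQHEigPow G k s μ x) : lam ≤ μ := by
  have hQ := G.isHermitian_signlessLapMatrix
  by_cases ha : blockProd x = 0
  · obtain ⟨⟨v, i⟩, hp⟩ := Function.ne_iff.mp hx.1
    have h := sub_degree_mul_pow_eq G (by omega) hs hx v i
    rw [ha, Pi.zero_apply, mul_zero, mul_eq_zero, sub_eq_zero] at h
    rw [h.resolve_right (pow_ne_zero _ hp)]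
    simpa [G.signlessLapMatrix_apply_self] using
      hQ.mul_dotProduct_self_le_dotProduct_mulVec hlam (Pi.single v 1)
  · have hquad : blockProd x ⬝ᵥ (G.signlessLapMatrix ℝ *ᵥ blockProd x)
        = μ * (blockProd x ⬝ᵥ blockProd x) := by
      simp only [dotProduct, mul_sum, ← mul_blockProd_sq_eq G hks hs hx, sq]
    have hpos : 0 < blockProd x ⬝ᵥ blockProd x := by
      simpa only [star_trivial] using dotProduct_star_self_pos_iff.mpr ha
    exact le_of_mul_le_mul_right (hquad ▸ hQ.mul_dotProduct_self_le_dotProduct_mulVec hlam _) hpos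

end PowerHypergraphEigen

theorem stmt16_general {V : Type*} [Fintype V] [DecidableEq V] (G : SimpleGraph V)
    [DecidableRel G.Adj] (k s : ℕ) (hk : 4 ≤ k) (hks : k = 2 * s)
    (Q : Matrix V V ℝ)
    (hQ : Q = Matrix.of fun u w : V =>
      (if u = w then (G.degree u : ℝ) else 0) + (if G.Adj u w then (1 : ℝ) else 0))
    (lam : ℝ)
    (hEig : ∃ y : V → ℝ, y ≠ 0 ∧ Q.mulVec y = lam • y)
    (hLeast : ∀ μ : ℝ, (∃ y : V → ℝ, y ≠ 0 ∧ Q.mulVec y = μ • y) → lam ≤ μ) :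
    (∃ x : V × Fin s → ℝ, IsQHEigPow G k s lam x) ∧
      ∀ μ : ℝ, (∃ x : V × Fin s → ℝ, IsQHEigPow G k s μ x) → lam ≤ μ := by
  have hs : 0 < s := by omega
  rw [hQ, G.of_eq_signlessLapMatrix] at hEig hLeast
  obtain ⟨y, hy, hyQ⟩ := hEig
  exact ⟨exists_isQHEigPow_of_mulVec_eq G hks hs hy hyQ,
    fun μ ⟨x, hx⟩ => le_of_isQHEigPow G hks hs hLeast hx⟩

/-- for a nonempty finite simple graph `G`, if `λ` is the least eigenvalue of
the signless Laplacian matrix `Q(G) = D(G) + A(G)` (it is an eigenvalue and is `≤` every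
eigenvalue), then `λ` is a signless Laplacian H-eigenvalue of `G^{k,k/2}` and every
signless Laplacian H-eigenvalue of `G^{k,k/2}` is at least `λ`; i.e. the least signless
Laplacian H-eigenvalue of `G^{k,k/2}` equals the least signless Laplacian eigenvalue of
`G`. -/
theorem stmt16 {V : Type*} [Fintype V] [DecidableEq V] [Nonempty V] (G : SimpleGraph V)
    [DecidableRel G.Adj] (k s : ℕ) (hk : 4 ≤ k) (hks : k = 2 * s)
    (Q : Matrix V V ℝ)
    (hQ : Q = Matrix.of fun u w : V =>
      (if u = w then (G.degree u : ℝ) else 0) + (if G.Adj u w then (1 : ℝ) else 0))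
    (lam : ℝ)
    (hEig : ∃ y : V → ℝ, y ≠ 0 ∧ Q.mulVec y = lam • y)
    (hLeast : ∀ μ : ℝ, (∃ y : V → ℝ, y ≠ 0 ∧ Q.mulVec y = μ • y) → lam ≤ μ) :
    (∃ x : V × Fin s → ℝ, IsQHEigPow G k s lam x) ∧
      ∀ μ : ℝ, (∃ x : V × Fin s → ℝ, IsQHEigPow G k s μ x) → lam ≤ μ :=
  stmt16_general G k s hk hks Q hQ lam hEig hLeast
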